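/- Let d ≥ 3, let c₀ > 0, and let S be a d×d real skew-symmetric matrix with ‖S‖ ≥ c₀ and |S e₁| ≤ c₀/4 (e₁ the first standard basis vector, ‖·‖ the operator norm and |·| the Euclidean norm). Let P be the (d−1)×d matrix deleting the first coordinate. Then sup_{w' ∈ ℝ^{d−1}, |w'| = 1} |P S Pᵀ w'| ≥ c₀/2. -/

import Mathlib

open Metric Matrix
open scoped RealInnerProductSpace

noncomputable section

abbrev Ed (d : ℕ) := EuclideanSpace ℝ (Fin d)

def toEd (m : ℕ) (v : Fin m → ℝ) : Ed m := WithLp.toLp 2 v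

/-- Euclidean operator norm of a matrix. -/
noncomputable def opN {d : ℕ} (M : Matrix (Fin d) (Fin d) ℝ) : ℝ :=
  ‖Matrix.toEuclideanCLM (𝕜 := ℝ) M‖

/-- `P S Pᵀ w'`, i.e. the vector `(S Pᵀw')_{j+1}`, `j = 1, …, d−1`, where `P` deletes the
first coordinate. -/
noncomputable def pspT (d : ℕ) (S : Matrix (Fin d) (Fin d) ℝ) (w : Ed (d - 1)) :
    Ed (d - 1) :=
  toEd (d - 1) (fun j =>
    (S *ᵥ (fun i : Fin d => if h : (i : ℕ) = 0 then 0 else w ⟨(i : ℕ) - 1, by omega⟩))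
      ⟨(j : ℕ) + 1, by omega⟩)

lemma Ed_norm_sq {m : ℕ} (x : Ed m) : ‖x‖ ^ 2 = ∑ i, x i ^ 2 := by
  rw [EuclideanSpace.norm_eq, Real.sq_sqrt (by positivity)]
  simp [Real.norm_eq_abs, sq_abs]

def liftv (n : ℕ) (w : Ed (n+2)) : Ed (n+3) :=
  toEd (n+3) (fun i : Fin (n+3) => if h : (i:ℕ) = 0 then 0 else w ⟨(i:ℕ)-1, by omega⟩)

lemma liftv_zero (n : ℕ) (w : Ed (n+2)) : liftv n w 0 = 0 := rfl

lemma liftv_succ (n : ℕ) (w : Ed (n+2)) (j : Fin (n+2)) : liftv n w j.succ = w j := by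
  simp only [liftv, toEd, Fin.val_succ]
  rw [dif_neg (by simp)]
  exact congrArg w (Fin.ext (by simp))

lemma Ed_split (n : ℕ) (x : Fin (n+3) → ℝ) :
    ‖toEd (n+3) x‖ ^ 2 = x 0 ^ 2 + ‖toEd (n+2) (fun j => x j.succ)‖ ^ 2 := by
  rw [Ed_norm_sq, Ed_norm_sq, Fin.sum_univ_succ]
  rfl

lemma liftv_norm (n : ℕ) (w : Ed (n+2)) : ‖liftv n w‖ = ‖w‖ := by
  have h : ‖liftv n w‖ ^ 2 = ‖w‖ ^ 2 := by
    have := Ed_split n (fun i => liftv n w i)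
    simp only [liftv_succ, liftv_zero] at this
    have e1 : (toEd (n+3) fun i => liftv n w i) = liftv n w := rfl
    have e2 : (toEd (n+2) fun j => w j) = w := rfl
    rw [e1, e2] at this
    simpa using this
  rw [← Real.sqrt_sq (norm_nonneg (liftv n w)), ← Real.sqrt_sq (norm_nonneg w), h]

lemma pspT_apply (n : ℕ) (S : Matrix (Fin (n+3)) (Fin (n+3)) ℝ) (w : Ed (n+2)) (j : Fin (n+2)) :
    pspT (n+3) S w j = (S *ᵥ (fun i => liftv n w i)) j.succ := rfl

lemma pspT_smul (n : ℕ) (S : Matrix (Fin (n+3)) (Fin (n+3)) ℝ) (c : ℝ) (w : Ed (n+2)) :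
    pspT (n+3) S (c • w) = c • pspT (n+3) S w := by
  ext j
  have hv : (fun i => liftv n (c • w) i) = fun i => c * liftv n w i := by
    funext i
    simp only [liftv, toEd]
    split
    · ring
    · rfl
  rw [PiLp.smul_apply, pspT_apply, pspT_apply, hv, smul_eq_mul]
  simp only [mulVec, dotProduct]
  rw [Finset.mul_sum]
  exact Finset.sum_congr rfl fun i _ => by ring

set_option maxHeartbeats 1000000 in
/-- If `S` is skew-symmetric with `‖S‖ ≥ c₀` and `|Se₁| ≤ c₀/4`, then
`sup_{|w'|=1} |PSPᵀw'| ≥ c₀/2`. -/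
theorem statement19 (d : ℕ) [NeZero d] (hd : 3 ≤ d) (c₀ : ℝ) (hc₀ : 0 < c₀)
    (S : Matrix (Fin d) (Fin d) ℝ) (hskew : Sᵀ = -S)
    (hnorm : c₀ ≤ opN S)
    (hSe1 : ‖toEd d (S *ᵥ (Pi.single (0 : Fin d) (1 : ℝ)))‖ ≤ c₀ / 4) :
    c₀ / 2 ≤ ⨆ w : sphere (0 : Ed (d - 1)) 1, ‖pspT d S (w : Ed (d - 1))‖ := by
  obtain ⟨n, rfl⟩ : ∃ n, d = n + 3 := ⟨d - 3, by omega⟩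
  set f := Matrix.toEuclideanCLM (𝕜 := ℝ) S with hfdef
  have hfapp : ∀ x : Ed (n+3), f x = toEd (n+3) (S *ᵥ (fun i => x i)) := fun x => rfl
  -- the key estimate for any w' with ‖w'‖ ≤ 1
  have key : ∀ w' : Ed (n+2), ‖w'‖ ≤ 1 →
      ‖f (liftv n w')‖ ≤ ‖pspT (n+3) S w'‖ + c₀ / 4 ∧
      ‖pspT (n+3) S w'‖ ≤ ‖f (liftv n w')‖ := by
    intro w' hw'
    set v := liftv n w' with hvdef
    have hveq : f v = toEd (n+3) (S *ᵥ (fun i => v i)) := hfapp v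
    have hps : (toEd (n+2) fun j => (S *ᵥ (fun i => v i)) j.succ) = pspT (n+3) S w' := by
      ext j
      exact (pspT_apply n S w' j).symm
    have hsplit : ‖f v‖ ^ 2 = ((S *ᵥ (fun i => v i)) 0) ^ 2 + ‖pspT (n+3) S w'‖ ^ 2 := by
      rw [hveq, Ed_split n (S *ᵥ (fun i => v i)), hps]
    -- bound on the first coordinate
    have h0bound : |(S *ᵥ (fun i => v i)) 0| ≤ c₀ / 4 := by
      have hcol : ∀ i, S i 0 = (toEd (n+3) (S *ᵥ (Pi.single (0 : Fin (n+3)) (1 : ℝ)))) i := by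
        intro i
        simp [toEd, mulVec_single]
      set e := toEd (n+3) (S *ᵥ (Pi.single (0 : Fin (n+3)) (1 : ℝ))) with hedef
      have hfv0 : (S *ᵥ (fun i => v i)) 0 = -⟪e, v⟫ := by
        rw [show (S *ᵥ (fun i => v i)) 0 = ∑ i, S 0 i * v i from rfl]
        rw [show ⟪e, v⟫ = ∑ i, e i * v i by
          rw [PiLp.inner_apply]; exact Finset.sum_congr rfl fun i _ => by simp only [RCLike.inner_apply, conj_trivial]; ring]
        rw [← Finset.sum_neg_distrib]
        refine Finset.sum_congr rfl fun i _ => ?_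
        have hs : S 0 i = -S i 0 := by
          have := congrFun (congrFun hskew i) 0
          simp [transpose_apply] at this
          linarith
        rw [hs, ← hcol i]
        ring
      rw [hfv0, abs_neg]
      calc |⟪e, v⟫| ≤ ‖e‖ * ‖v‖ := abs_real_inner_le_norm e v
        _ ≤ (c₀ / 4) * 1 := by
            apply mul_le_mul hSe1 (by rw [hvdef, liftv_norm]; exact hw') (norm_nonneg v)
            linarith
        _ = c₀ / 4 := by ring
    constructor
    · nlinarith [norm_nonneg (f v), norm_nonneg (pspT (n+3) S w'),
        abs_nonneg ((S *ᵥ (fun i => v i)) 0), sq_abs ((S *ᵥ (fun i => v i)) 0)]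
    · nlinarith [norm_nonneg (f v), norm_nonneg (pspT (n+3) S w'),
        sq_nonneg ((S *ᵥ (fun i => v i)) 0)]
  -- boundedness of the sup
  have hbdd : BddAbove (Set.range fun w : sphere (0 : Ed (n+2)) 1 => ‖pspT (n+3) S (w : Ed (n+2))‖) := by
    refine ⟨opN S, ?_⟩
    rintro x ⟨w, rfl⟩
    have hw1 : ‖(w : Ed (n+2))‖ = 1 := by
      exact mem_sphere_zero_iff_norm.mp w.2
    calc ‖pspT (n+3) S (w : Ed (n+2))‖ ≤ ‖f (liftv n (w : Ed (n+2)))‖ :=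
          (key _ hw1.le).2
      _ ≤ ‖f‖ * ‖liftv n (w : Ed (n+2))‖ := f.le_opNorm _
      _ = opN S := by rw [liftv_norm, hw1, mul_one]; rfl
  have hne : Nonempty (sphere (0 : Ed (n+2)) 1) := by
    refine ⟨⟨toEd (n+2) (Pi.single 0 1), ?_⟩⟩
    simp only [mem_sphere_iff_norm, sub_zero]
    rw [show toEd (n+2) (Pi.single 0 1) = EuclideanSpace.single (0 : Fin (n+2)) (1:ℝ) from rfl]
    simp [EuclideanSpace.norm_single]
  have hsup0 : (0:ℝ) ≤ ⨆ w : sphere (0 : Ed (n+2)) 1, ‖pspT (n+3) S (w : Ed (n+2))‖ := by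
    obtain ⟨u⟩ := hne
    exact le_trans (norm_nonneg _) (le_ciSup hbdd u)
  -- main ε argument
  refine le_of_forall_pos_le_add ?_
  intro ε hε
  have hlt : opN S - ε < ‖f‖ := by
    have : opN S = ‖f‖ := rfl
    linarith
  obtain ⟨w, hwlt, hfw⟩ := f.exists_lt_apply_of_lt_opNorm hlt
  -- decompose w
  set w' : Ed (n+2) := toEd (n+2) (fun j => w j.succ) with hw'def
  have hw'le : ‖w'‖ ≤ 1 := by
    have h1 : ‖w'‖ ^ 2 ≤ ‖w‖ ^ 2 := by
      have := Ed_split n (fun i => w i)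
      have hx : (toEd (n+3) fun i => w i) = w := rfl
      rw [hx] at this
      nlinarith [sq_nonneg (w 0)]
    nlinarith [norm_nonneg w', norm_nonneg w]
  have hwdec : w = liftv n w' + toEd (n+3) (Pi.single 0 (w 0)) := by
    ext i
    refine Fin.cases ?_ (fun j => ?_) i
    · simp [PiLp.add_apply, liftv_zero, toEd, Pi.single_eq_same]
    · have h2 : (toEd (n+3) (Pi.single (0:Fin (n+3)) (w 0))) j.succ = 0 := by
        simp [toEd, Pi.single_eq_of_ne (Fin.succ_ne_zero j)]
      simp only [PiLp.add_apply, liftv_succ, h2, add_zero]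
      rfl
  -- the single-coordinate part has small image
  have hfe1 : ‖f (toEd (n+3) (Pi.single 0 (w 0)))‖ ≤ c₀ / 4 := by
    have hps : (toEd (n+3) (Pi.single (0:Fin (n+3)) (w 0))) = w 0 • toEd (n+3) (Pi.single 0 1) := by
      ext i
      simp [toEd, Pi.single_apply, PiLp.smul_apply, mul_ite]
    rw [hps, _root_.map_smul, norm_smul]
    have habs : |w 0| ≤ 1 := by
      have h1 : (w 0) ^ 2 ≤ ‖w‖ ^ 2 := by
        rw [Ed_norm_sq]
        exact Finset.single_le_sum (f := fun i => w i ^ 2) (fun i _ => sq_nonneg _)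
          (Finset.mem_univ 0)
      nlinarith [norm_nonneg w, abs_nonneg (w 0), sq_abs (w 0)]
    have hfe : ‖f (toEd (n+3) (Pi.single 0 1))‖ ≤ c₀ / 4 := by
      rw [hfapp]
      exact hSe1
    calc ‖w 0‖ * ‖f (toEd (n+3) (Pi.single 0 1))‖ ≤ 1 * (c₀/4) := by
          apply mul_le_mul habs hfe (norm_nonneg _) zero_le_one
      _ = c₀ / 4 := one_mul _
  have hflift : c₀ - ε - c₀/4 ≤ ‖f (liftv n w')‖ := by
    have h1 : ‖f w‖ ≤ ‖f (liftv n w')‖ + ‖f (toEd (n+3) (Pi.single 0 (w 0)))‖ := by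
      conv_lhs => rw [hwdec]
      rw [map_add]
      exact norm_add_le _ _
    linarith
  have hkey := key w' hw'le
  have hpsbig : c₀/2 - ε ≤ ‖pspT (n+3) S w'‖ := by linarith [hkey.1]
  -- normalize
  by_cases hz : w' = 0
  · have hzero : pspT (n+3) S w' = 0 := by
      rw [hz, show (0 : Ed (n+2)) = (0:ℝ) • (0 : Ed (n+2)) by simp, pspT_smul]
      simp
    rw [hzero, norm_zero] at hpsbig
    linarith
  · have hnz : ‖w'‖ ≠ 0 := norm_ne_zero_iff.mpr hz
    have hpos : 0 < ‖w'‖ := lt_of_le_of_ne (norm_nonneg _) (Ne.symm hnz)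
    set u : Ed (n+2) := ‖w'‖⁻¹ • w' with hudef
    have hu1 : ‖u‖ = 1 := by
      rw [hudef, norm_smul, norm_inv, norm_norm, inv_mul_cancel₀ hnz]
    have hpu : ‖pspT (n+3) S u‖ = ‖w'‖⁻¹ * ‖pspT (n+3) S w'‖ := by
      rw [hudef, pspT_smul, norm_smul, Real.norm_eq_abs, abs_inv, abs_norm]
    have hge : ‖pspT (n+3) S w'‖ ≤ ‖pspT (n+3) S u‖ := by
      rw [hpu]
      have h1 : (1:ℝ) ≤ ‖w'‖⁻¹ := by
        nlinarith [mul_inv_cancel₀ hnz, inv_nonneg.mpr (norm_nonneg w')]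
      nlinarith [norm_nonneg (pspT (n+3) S w')]
    have hmem : u ∈ sphere (0 : Ed (n+2)) 1 := by
      simp [mem_sphere_iff_norm, hu1]
    have hsup := le_ciSup hbdd (⟨u, hmem⟩ : sphere (0 : Ed (n+2)) 1)
    linarith
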